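/- Let F be a field, R the ring of ternions over F, and n ≥ 1. The group GL_{n+1}(R) acts transitively on the set of non-unimodular free cyclic submodules of R^{n+1}: for any two non-unimodular free cyclic submodules M and M′ there exists A ∈ GL_{n+1}(R) with M·A = M′. -/

import Mathlib

set_option synthInstance.maxHeartbeats 1000000
set_option maxHeartbeats 1000000

/-- The ring of ternions over a field `F`: the subring of `2×2` matrices over `F`
consisting of all upper triangular matrices. -/
def ternions (F : Type) [Field F] : Subring (Matrix (Fin 2) (Fin 2) F) where
  carrier := {A | A 1 0 = 0}
  zero_mem' := by simp
  one_mem' := by simp [Matrix.one_apply]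
  add_mem' := by
    intro a b ha hb
    simp only [Set.mem_setOf_eq, Matrix.add_apply] at *
    simp [ha, hb]
  neg_mem' := by
    intro a ha
    simp only [Set.mem_setOf_eq, Matrix.neg_apply] at *
    simp [ha]
  mul_mem' := by
    intro a b ha hb
    simp only [Set.mem_setOf_eq, Matrix.mul_apply, Fin.sum_univ_two] at *
    simp [ha, hb]

/-!
Write a ternion vector as `Xᵢ = !![aᵢ, bᵢ; 0, cᵢ]`. If some `cₘ ≠ 0`, then any `aₖ ≠ 0` makes `X`
unimodular, since `Xₖ` and `Xₘ` combine on the right to `1`; if all `cᵢ = 0`, then `!![0, 1; 0, 0]`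
annihilates `X`; and a relation `α b + β c = 0` makes `!![α, β; 0, 0]` annihilate `X`. So a
non-unimodular free `X` has `a = 0` with `b, c` linearly independent over `F`. An invertible `G`
over `F` with `b G = b'` and `c G = c'` exists because `GL_{n+1}(F)` is transitive on linearly
independent pairs, and embedded diagonally by `x ↦ !![x, 0; 0, x]` it maps `X` to `X'`.
-/

open Matrix Module

theorem Module.Basis.sumExtend_inl {K V ι : Type*} [DivisionRing K] [AddCommGroup V]
    [Module K V] {v : ι → V} (hv : LinearIndependent K v) (i : ι) :
    Basis.sumExtend hv (Sum.inl i) = v i := by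
  simp only [Basis.sumExtend, Basis.reindex_apply, Basis.extend_apply_self]
  rfl

theorem LinearIndependent.exists_linearEquiv_comp_eq {K V ι : Type*} [DivisionRing K]
    [AddCommGroup V] [Module K V] [FiniteDimensional K V] {v v' : ι → V}
    (hv : LinearIndependent K v) (hv' : LinearIndependent K v') :
    ∃ γ : V ≃ₗ[K] V, γ ∘ v = v' := by
  set B := Basis.sumExtend hv
  set B' := Basis.sumExtend hv'
  have : Finite (ι ⊕ Basis.sumExtendIndex hv) := Module.Finite.finite_basis B
  have : Finite (ι ⊕ Basis.sumExtendIndex hv') := Module.Finite.finite_basis B'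
  have : Finite ι := Finite.sum_left (Basis.sumExtendIndex hv)
  have := Finite.sum_right ι (β := Basis.sumExtendIndex hv)
  have := Finite.sum_right ι (β := Basis.sumExtendIndex hv')
  have hcard : Nat.card (Basis.sumExtendIndex hv) = Nat.card (Basis.sumExtendIndex hv') := by
    have := (finrank_eq_nat_card_basis B).symm.trans (finrank_eq_nat_card_basis B')
    rw [Nat.card_sum, Nat.card_sum] at this
    omega
  obtain ⟨e⟩ := Finite.card_eq.mp hcard
  refine ⟨B.equiv B' (Equiv.sumCongr (Equiv.refl ι) e), funext fun i => ?_⟩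
  simpa [B, B', Basis.sumExtend_inl] using
    B.equiv_apply (Sum.inl i) B' (Equiv.sumCongr (Equiv.refl ι) e)

theorem Matrix.exists_isUnit_forall_vecMul_eq {K ι κ : Type*} [Field K] [Fintype ι]
    [DecidableEq ι] {v v' : κ → ι → K} (hv : LinearIndependent K v)
    (hv' : LinearIndependent K v') :
    ∃ G : Matrix ι ι K, IsUnit G ∧ ∀ k, v k ᵥ* G = v' k := by
  obtain ⟨γ, hγ⟩ := hv.exists_linearEquiv_comp_eq hv'
  have hvecMul (x : ι → K) : x ᵥ* (LinearMap.toMatrix' (γ : (ι → K) →ₗ[K] ι → K))ᵀ = γ x := by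
    rw [vecMul_transpose, LinearMap.toMatrix'_mulVec, LinearEquiv.coe_coe]
  refine ⟨_, vecMul_injective_iff_isUnit.mp ?_, fun k => by rw [hvecMul, ← hγ]; rfl⟩
  intro x y hxy
  simpa only [hvecMul, γ.injective.eq_iff] using hxy

def IsUnimodular {R ι : Type*} [Semiring R] (X : ι → R) : Prop :=
  ∃ φ : (ι → R) →ₗ[R] R, φ X = 1

theorem isUnimodular_of_dotProduct_eq_one {R ι : Type*} [Semiring R] [Fintype ι] {X s : ι → R}
    (h : X ⬝ᵥ s = 1) : IsUnimodular X :=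
  ⟨{ toFun := (· ⬝ᵥ s)
     map_add' := fun v w => add_dotProduct v w s
     map_smul' := fun r v => smul_dotProduct r v s }, h⟩

theorem Matrix.image_vecMul_span_singleton {R m n : Type*} [Semiring R] [Fintype m]
    (A : Matrix m n R) (X : m → R) :
    (· ᵥ* A) '' (Submodule.span R {X} : Set (m → R)) = Submodule.span R {X ᵥ* A} := by
  have h := congrArg SetLike.coe (Submodule.map_span A.vecMulLinear {X})
  rwa [Submodule.map_coe, Set.image_singleton] at h

namespace ternions

variable {F : Type} [Field F] {ι : Type*}

def mk (a b c : F) : ternions F :=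
  ⟨!![a, b; 0, c], by change !![a, b; 0, c] 1 0 = 0; simp⟩

theorem exists_eq_mk (x : ternions F) : ∃ a b c : F, x = mk a b c := by
  refine ⟨x.1 0 0, x.1 0 1, x.1 1 1, Subtype.ext ?_⟩
  ext i j
  fin_cases i <;> fin_cases j <;> simp [mk, show x.1 1 0 = 0 from x.2]

theorem mk_inj {a b c a' b' c' : F} : mk a b c = mk a' b' c' ↔ a = a' ∧ b = b' ∧ c = c' := by
  refine ⟨fun h => ?_, by rintro ⟨rfl, rfl, rfl⟩; rfl⟩
  have h' := congrArg Subtype.val h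
  exact ⟨by simpa [mk] using congrFun₂ h' 0 0, by simpa [mk] using congrFun₂ h' 0 1,
    by simpa [mk] using congrFun₂ h' 1 1⟩

theorem mk_zero : mk (0 : F) 0 0 = 0 :=
  Subtype.ext <| by ext i j; fin_cases i <;> fin_cases j <;> rfl

theorem mk_one : mk (1 : F) 0 1 = 1 :=
  Subtype.ext <| by ext i j; fin_cases i <;> fin_cases j <;> rfl

theorem mk_add (a b c a' b' c' : F) : mk a b c + mk a' b' c' = mk (a + a') (b + b') (c + c') :=
  Subtype.ext <| by ext i j; fin_cases i <;> fin_cases j <;> simp [mk]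

theorem mk_mul (a b c a' b' c' : F) :
    mk a b c * mk a' b' c' = mk (a * a') (a * b' + b * c') (c * c') :=
  Subtype.ext <| by ext i j; fin_cases i <;> fin_cases j <;> simp [mk]

theorem sum_mk (s : Finset ι) (a b c : ι → F) :
    ∑ i ∈ s, mk (a i) (b i) (c i) = mk (∑ i ∈ s, a i) (∑ i ∈ s, b i) (∑ i ∈ s, c i) := by
  induction s using Finset.cons_induction with
  | empty => simp [mk_zero]
  | cons i s hi ih => simp [Finset.sum_cons, ih, mk_add]

def scalar : F →+* ternions F where
  toFun x := mk x 0 x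
  map_one' := mk_one
  map_mul' x y := by simp [mk_mul]
  map_zero' := mk_zero
  map_add' x y := by simp [mk_add]

theorem vecMul_map_scalar {κ : Type*} [Fintype ι] (a b c : ι → F) (G : Matrix ι κ F) :
    (fun i => mk (a i) (b i) (c i)) ᵥ* G.map scalar =
      fun j => mk ((a ᵥ* G) j) ((b ᵥ* G) j) ((c ᵥ* G) j) := by
  ext1 j
  simp [vecMul, dotProduct, scalar, mk_mul, sum_mk]

theorem exists_ne_zero_of_injective_smul {a b c : ι → F}
    (hfree : Function.Injective fun r : ternions F => r • fun i => mk (a i) (b i) (c i)) :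
    ∃ m, c m ≠ 0 := by
  by_contra! hc
  have hann : mk (0 : F) 1 0 • (fun i => mk (a i) (b i) (c i)) =
      (0 : ternions F) • fun i => mk (a i) (b i) (c i) := by
    ext1 i
    simp [mk_mul, hc, mk_zero]
  simpa [← mk_zero, mk_inj] using hfree hann

theorem eq_zero_of_not_isUnimodular [Fintype ι] {a b c : ι → F}
    (hnu : ¬IsUnimodular fun i => mk (a i) (b i) (c i)) {m : ι} (hm : c m ≠ 0) (k : ι) :
    a k = 0 := by
  classical
  by_contra hk
  apply hnu
  -- `Xₖ` and `Xₘ` times the two summands of `s` are `mk 1 (-bₘ/cₘ) 0` and `mk 0 (bₘ/cₘ) 1`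
  apply isUnimodular_of_dotProduct_eq_one
    (s := Pi.single k (mk (a k)⁻¹ (-((a k)⁻¹ * (b m / c m))) 0) + Pi.single m (mk 0 0 (c m)⁻¹))
  rw [dotProduct_add, dotProduct_single, dotProduct_single, mk_mul, mk_mul, mk_add, ← mk_one,
    mk_inj]
  field_simp
  simp

theorem linearIndependent_of_injective_smul {b c : ι → F}
    (hfree : Function.Injective fun r : ternions F => r • fun i => mk 0 (b i) (c i)) :
    LinearIndependent F ![b, c] := by
  refine LinearIndependent.pair_iff.mpr fun α β hαβ => ?_
  have hann : mk α β 0 • (fun i => mk 0 (b i) (c i)) =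
      (0 : ternions F) • fun i => mk 0 (b i) (c i) := by
    ext1 i
    have hi : α * b i + β * c i = 0 := by simpa using congrFun hαβ i
    simp [mk_mul, hi, mk_zero]
  simpa [← mk_zero, mk_inj] using hfree hann

theorem exists_linearIndependent_of_injective_smul_of_not_isUnimodular [Fintype ι]
    {Z : ι → ternions F}
    (hfree : Function.Injective fun r : ternions F => r • Z) (hnu : ¬IsUnimodular Z) :
    ∃ b c : ι → F, LinearIndependent F ![b, c] ∧ Z = fun i => mk 0 (b i) (c i) := by
  choose a b c hZ using fun i => exists_eq_mk (Z i)
  obtain rfl : Z = fun i => mk (a i) (b i) (c i) := funext hZ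
  obtain ⟨m, hm⟩ := exists_ne_zero_of_injective_smul hfree
  have ha := eq_zero_of_not_isUnimodular hnu hm
  simp only [ha] at hfree ⊢
  exact ⟨b, c, linearIndependent_of_injective_smul hfree, rfl⟩

end ternions

theorem ternion_transitive_on_nonUnimodular_free_general (F : Type) [Field F] (n : ℕ)
    (X Y : Fin (n + 1) → ternions F)
    (hX : Function.Injective (fun r : ternions F => r • X))
    (hXnu : ¬ ∃ φ : (Fin (n + 1) → ternions F) →ₗ[ternions F] ternions F, φ X = 1)
    (hY : Function.Injective (fun r : ternions F => r • Y))
    (hYnu : ¬ ∃ φ : (Fin (n + 1) → ternions F) →ₗ[ternions F] ternions F, φ Y = 1) :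
    ∃ A : (Matrix (Fin (n + 1)) (Fin (n + 1)) (ternions F))ˣ,
      (fun v => Matrix.vecMul v A.val) ''
          (Submodule.span (ternions F) {X} : Set (Fin (n + 1) → ternions F)) =
        (Submodule.span (ternions F) {Y} : Set (Fin (n + 1) → ternions F)) := by
  obtain ⟨b, c, hbc, rfl⟩ :=
    ternions.exists_linearIndependent_of_injective_smul_of_not_isUnimodular hX hXnu
  obtain ⟨b', c', hbc', rfl⟩ :=
    ternions.exists_linearIndependent_of_injective_smul_of_not_isUnimodular hY hYnu
  obtain ⟨G, hG, hGbc⟩ := exists_isUnit_forall_vecMul_eq hbc hbc'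
  refine ⟨(hG.map ternions.scalar.mapMatrix).unit, ?_⟩
  rw [IsUnit.unit_spec, image_vecMul_span_singleton, RingHom.mapMatrix_apply,
    ternions.vecMul_map_scalar]
  have hb : b ᵥ* G = b' := hGbc 0
  have hc : c ᵥ* G = c' := hGbc 1
  simp only [hb, hc, ← Pi.zero_def, zero_vecMul, Pi.zero_apply]

/-- `GL_{n+1}(R)` acts transitively on the non-unimodular free cyclic submodules of
`R^{n+1}`: for any two such submodules `R·X` and `R·Y` there is an invertible matrix `A`
over `R` mapping the first onto the second (element-wise right multiplication). -/
theorem ternion_transitive_on_nonUnimodular_free (F : Type) [Field F] (n : ℕ)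
    (hn : 1 ≤ n) (X Y : Fin (n + 1) → ternions F)
    (hX : Function.Injective (fun r : ternions F => r • X))
    (hXnu : ¬ ∃ φ : (Fin (n + 1) → ternions F) →ₗ[ternions F] ternions F, φ X = 1)
    (hY : Function.Injective (fun r : ternions F => r • Y))
    (hYnu : ¬ ∃ φ : (Fin (n + 1) → ternions F) →ₗ[ternions F] ternions F, φ Y = 1) :
    ∃ A : (Matrix (Fin (n + 1)) (Fin (n + 1)) (ternions F))ˣ,
      (fun v => Matrix.vecMul v A.val) ''
          (Submodule.span (ternions F) {X} : Set (Fin (n + 1) → ternions F)) =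
        (Submodule.span (ternions F) {Y} : Set (Fin (n + 1) → ternions F)) :=
  ternion_transitive_on_nonUnimodular_free_general F n X Y hX hXnu hY hYnu
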